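/- arXiv:2206.09204 — 6 statements merged into one kernel-verified Lean document; each statement's English description precedes it below -/
import Mathlib

section
/- There is an absolute constant K > 0 such that for every integer τ ≥ 1 and every real x with |x| ≤ 1/2, arcsin(x) ≥ Σ_{k=0}^{τ} c_k x^{2k+1} − K · τ^{−1/2} · 4^{−τ}. -/
/-- Taylor coefficients of `arcsin`: `c_k = (2k)! / (4^k (k!)^2 (2k+1))`. -/
noncomputable def arcsinCoeff (k : ℕ) : ℝ :=
  (Nat.factorial (2 * k) : ℝ) / (4 ^ k * (Nat.factorial k : ℝ) ^ 2 * (2 * k + 1))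

/-!
Write `a_n = C(2n, n) / 4^n`, so that `c_k = a_k / (2k + 1)` and the derivative of the Taylor
polynomial `S_n` of `arcsin` is `q_n(t) = Σ_{k ≤ n} a_k t^(2k)`. The recursion
`(2k + 2) a_(k+1) = (2k + 1) a_k` telescopes to
`(q_n(t) √(1 - t²))' = -(2n + 1) a_n t^(2n+1) / √(1 - t²)`.
Hence `q_n √(1 - t²)` decreases from `1` on `[0, 1)`, i.e. `q_n ≤ arcsin'` there; and on `[0, 1/2]`,
where `√(1 - t²) ≥ 1/2`, it drops by at most `2 a_n t^(2n+2)`, which gives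
`arcsin' - q_n ≤ a_n / 4^n`. Integrating and using oddness,
`|arcsin x - S_n x| ≤ a_n |x| / 4^n` for `|x| ≤ 1/2`, and `a_n ≤ n^(-1/2)` because
`a_n² (2n + 1)` is nonincreasing.
-/

open Real Set

lemma monotoneOn_of_hasDerivAt_nonneg {D : Set ℝ} (hD : Convex ℝ D) {f f' : ℝ → ℝ}
    (hf : ∀ x ∈ D, HasDerivAt f (f' x) x) (hf'₀ : ∀ x ∈ D, 0 ≤ f' x) : MonotoneOn f D :=
  monotoneOn_of_hasDerivWithinAt_nonneg hD (fun x hx ↦ (hf x hx).continuousAt.continuousWithinAt)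
    (fun x hx ↦ (hf x (interior_subset hx)).hasDerivWithinAt)
    (fun x hx ↦ hf'₀ x (interior_subset hx))

/-- The Taylor coefficients of `(1 - t²)^(-1/2) = arcsin' t`. -/
noncomputable def invSqrtCoeff (k : ℕ) : ℝ := Nat.centralBinom k / 4 ^ k

lemma invSqrtCoeff_pos (k : ℕ) : 0 < invSqrtCoeff k := by
  have := Nat.centralBinom_pos k
  unfold invSqrtCoeff
  positivity

lemma invSqrtCoeff_zero : invSqrtCoeff 0 = 1 := by simp [invSqrtCoeff]

lemma two_mul_add_two_mul_invSqrtCoeff_succ (k : ℕ) :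
    (2 * k + 2) * invSqrtCoeff (k + 1) = (2 * k + 1) * invSqrtCoeff k := by
  have h : ((k + 1) * Nat.centralBinom (k + 1) : ℝ) = 2 * (2 * k + 1) * Nat.centralBinom k := by
    exact_mod_cast Nat.succ_mul_centralBinom_succ k
  simp only [invSqrtCoeff, pow_succ]
  field_simp
  linear_combination 2 * h

lemma arcsinCoeff_eq (k : ℕ) : arcsinCoeff k = invSqrtCoeff k / (2 * k + 1) := by
  have h : ((Nat.centralBinom k * k.factorial * k.factorial : ℕ) : ℝ) = (2 * k).factorial := by
    rw [Nat.centralBinom_eq_two_mul_choose]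
    congr 1
    simpa [two_mul] using Nat.choose_mul_factorial_mul_factorial (Nat.le_add_left k k)
  rw [arcsinCoeff, invSqrtCoeff, ← h]
  push_cast
  field_simp

lemma invSqrtCoeff_sq_mul_le_one (k : ℕ) : invSqrtCoeff k ^ 2 * (2 * k + 1) ≤ 1 := by
  induction k with
  | zero => simp [invSqrtCoeff_zero]
  | succ k ih =>
    have hrec := two_mul_add_two_mul_invSqrtCoeff_succ k
    have hk : (0 : ℝ) ≤ k := k.cast_nonneg
    refine le_of_mul_le_mul_right ?_ (by positivity : (0 : ℝ) < (2 * k + 2) ^ 2)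
    calc invSqrtCoeff (k + 1) ^ 2 * (2 * ((k + 1 : ℕ) : ℝ) + 1) * (2 * (k : ℝ) + 2) ^ 2
        = invSqrtCoeff k ^ 2 * (2 * k + 1) * ((2 * k + 1) * (2 * k + 3)) := by
          push_cast
          linear_combination (2 * (k : ℝ) + 3) * ((2 * k + 2) * invSqrtCoeff (k + 1) +
            (2 * k + 1) * invSqrtCoeff k) * hrec
      _ ≤ 1 * (2 * (k : ℝ) + 2) ^ 2 := by
          gcongr ?_ * ?_
          nlinarith

lemma invSqrtCoeff_le_inv_sqrt {k : ℕ} (hk : 1 ≤ k) : invSqrtCoeff k ≤ (√k)⁻¹ := by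
  have hk' : (0 : ℝ) < k := by exact_mod_cast hk
  have hs : 0 < √(k : ℝ) := sqrt_pos.2 hk'
  have hsq : (invSqrtCoeff k * √k) ^ 2 ≤ 1 := by
    rw [mul_pow, sq_sqrt hk'.le]
    nlinarith [invSqrtCoeff_sq_mul_le_one k, sq_nonneg (invSqrtCoeff k)]
  rw [← one_div, le_div_iff₀ hs]
  nlinarith [mul_pos (invSqrtCoeff_pos k) hs]

noncomputable def arcsinTaylor (n : ℕ) (x : ℝ) : ℝ :=
  ∑ k ∈ Finset.range (n + 1), arcsinCoeff k * x ^ (2 * k + 1)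

noncomputable def invSqrtTaylor (n : ℕ) (t : ℝ) : ℝ :=
  ∑ k ∈ Finset.range (n + 1), invSqrtCoeff k * t ^ (2 * k)

lemma invSqrtTaylor_apply_zero (n : ℕ) : invSqrtTaylor n 0 = 1 := by
  simp [invSqrtTaylor, Finset.sum_range_succ', invSqrtCoeff_zero]

lemma arcsinTaylor_apply_zero (n : ℕ) : arcsinTaylor n 0 = 0 := by simp [arcsinTaylor]

lemma arcsinTaylor_neg (n : ℕ) (x : ℝ) : arcsinTaylor n (-x) = -arcsinTaylor n x := by
  simp [arcsinTaylor, Odd.neg_pow (odd_two_mul_add_one _), ← Finset.sum_neg_distrib]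

lemma hasDerivAt_arcsinTaylor (n : ℕ) (t : ℝ) :
    HasDerivAt (arcsinTaylor n) (invSqrtTaylor n t) t := by
  unfold arcsinTaylor invSqrtTaylor
  refine HasDerivAt.fun_sum fun k _ ↦ ((hasDerivAt_pow (2 * k + 1) t).const_mul _).congr_deriv ?_
  rw [arcsinCoeff_eq, Nat.add_sub_cancel]
  push_cast
  field_simp

lemma hasDerivAt_invSqrtTaylor_mul_sqrt (n : ℕ) {t : ℝ} (ht : t ^ 2 < 1) :
    HasDerivAt (fun s ↦ invSqrtTaylor n s * √(1 - s ^ 2))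
      (-((2 * n + 1) * invSqrtCoeff n * t ^ (2 * n + 1)) / √(1 - t ^ 2)) t := by
  have hpos : 0 < √(1 - t ^ 2) := sqrt_pos.2 (by linarith)
  have hsq : √(1 - t ^ 2) ^ 2 = 1 - t ^ 2 := sq_sqrt (by linarith)
  have hsqrt : HasDerivAt (fun s ↦ √(1 - s ^ 2)) (-(2 * t) / (2 * √(1 - t ^ 2))) t := by
    refine HasDerivAt.sqrt ?_ (by linarith)
    simpa using ((hasDerivAt_pow 2 t).const_sub 1)
  induction n with
  | zero =>
    refine (hsqrt.congr_deriv ?_).congr_of_eventuallyEq ?_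
    · field_simp
      simp [invSqrtCoeff_zero]
    · filter_upwards with s
      simp [invSqrtTaylor, invSqrtCoeff_zero]
  | succ n ih =>
    have hterm := ((hasDerivAt_pow (2 * n + 2) t).const_mul (invSqrtCoeff (n + 1))).mul hsqrt
    have hsplit : (fun s ↦ invSqrtTaylor (n + 1) s * √(1 - s ^ 2)) = fun s ↦
        invSqrtTaylor n s * √(1 - s ^ 2) + invSqrtCoeff (n + 1) * s ^ (2 * n + 2) * √(1 - s ^ 2) := by
      funext s
      simp only [invSqrtTaylor, Finset.sum_range_succ _ (n + 1)]
      ring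
    rw [hsplit]
    refine (ih.add hterm).congr_deriv ?_
    have hrec := two_mul_add_two_mul_invSqrtCoeff_succ n
    field_simp
    rw [hsq]
    push_cast
    linear_combination t ^ (2 * n + 1) * hrec

lemma invSqrtTaylor_mul_sqrt_le_one (n : ℕ) {t : ℝ} (ht₀ : 0 ≤ t) (ht₁ : t < 1) :
    invSqrtTaylor n t * √(1 - t ^ 2) ≤ 1 := by
  have hmono : MonotoneOn (fun s ↦ -(invSqrtTaylor n s * √(1 - s ^ 2))) (Ico 0 1) :=
    monotoneOn_of_hasDerivAt_nonneg (convex_Ico 0 1)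
      (fun s hs ↦ (hasDerivAt_invSqrtTaylor_mul_sqrt n (by nlinarith [hs.1, hs.2])).neg)
      (fun s hs ↦ by
        have hc := invSqrtCoeff_pos n
        have hs₀ := hs.1
        rw [neg_div, neg_neg]
        positivity)
  simpa [invSqrtTaylor_apply_zero] using hmono ⟨le_rfl, one_pos⟩ ⟨ht₀, ht₁⟩ ht₀

lemma invSqrtTaylor_le (n : ℕ) {t : ℝ} (ht₀ : 0 ≤ t) (ht₁ : t < 1) :
    invSqrtTaylor n t ≤ 1 / √(1 - t ^ 2) := by
  rw [le_div_iff₀ (sqrt_pos.2 (by nlinarith))]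
  exact invSqrtTaylor_mul_sqrt_le_one n ht₀ ht₁

lemma arcsinTaylor_le_arcsin (n : ℕ) {x : ℝ} (hx₀ : 0 ≤ x) (hx₁ : x < 1) :
    arcsinTaylor n x ≤ arcsin x := by
  have hmono : MonotoneOn (fun s ↦ arcsin s - arcsinTaylor n s) (Ico 0 1) :=
    monotoneOn_of_hasDerivAt_nonneg (convex_Ico 0 1)
      (fun s hs ↦ (hasDerivAt_arcsin (by linarith [hs.1]) hs.2.ne).sub
        (hasDerivAt_arcsinTaylor n s))
      (fun s hs ↦ sub_nonneg.2 (invSqrtTaylor_le n hs.1 hs.2))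
  simpa [arcsinTaylor_apply_zero] using hmono ⟨le_rfl, one_pos⟩ ⟨hx₀, hx₁⟩ hx₀

lemma half_le_sqrt_one_sub_sq {t : ℝ} (ht : t ∈ Icc (0 : ℝ) (1 / 2)) : 1 / 2 ≤ √(1 - t ^ 2) :=
  (le_sqrt (by norm_num) (by nlinarith [ht.1, ht.2])).2 (by nlinarith [ht.1, ht.2])

lemma one_sub_invSqrtTaylor_mul_sqrt_le (n : ℕ) {t : ℝ} (ht : t ∈ Icc (0 : ℝ) (1 / 2)) :
    1 - invSqrtTaylor n t * √(1 - t ^ 2) ≤ 2 * invSqrtCoeff n * t ^ (2 * n + 2) := by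
  have hmono : MonotoneOn
      (fun s ↦ invSqrtTaylor n s * √(1 - s ^ 2) + 2 * invSqrtCoeff n * s ^ (2 * n + 2))
      (Icc 0 (1 / 2)) := by
    refine monotoneOn_of_hasDerivAt_nonneg (convex_Icc 0 (1 / 2))
      (fun s hs ↦ (hasDerivAt_invSqrtTaylor_mul_sqrt n (by nlinarith [hs.1, hs.2])).add
        ((hasDerivAt_pow _ s).const_mul _)) (fun s hs ↦ ?_)
    have hhalf := half_le_sqrt_one_sub_sq hs
    have hc := invSqrtCoeff_pos n
    have hpow : 0 ≤ s ^ (2 * n + 1) := pow_nonneg hs.1 _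
    rw [show 2 * n + 2 - 1 = 2 * n + 1 by omega, neg_div, ← sub_eq_neg_add, sub_nonneg,
      div_le_iff₀ (by linarith)]
    push_cast
    nlinarith [mul_nonneg (mul_nonneg hc.le hpow) (sub_nonneg.2 hhalf)]
  have := hmono ⟨le_rfl, by norm_num⟩ ht ht.1
  norm_num [invSqrtTaylor_apply_zero] at this
  linarith

lemma one_div_sqrt_sub_invSqrtTaylor_le (n : ℕ) {t : ℝ} (ht : t ∈ Icc (0 : ℝ) (1 / 2)) :
    1 / √(1 - t ^ 2) - invSqrtTaylor n t ≤ invSqrtCoeff n / 4 ^ n := by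
  have hhalf := half_le_sqrt_one_sub_sq ht
  have hgap := one_sub_invSqrtTaylor_mul_sqrt_le n ht
  have hgap₀ : 0 ≤ 1 - invSqrtTaylor n t * √(1 - t ^ 2) := by
    linarith [invSqrtTaylor_mul_sqrt_le_one n ht.1 (by linarith [ht.2])]
  have hpow : t ^ (2 * n + 2) ≤ 1 / 4 / 4 ^ n := by
    calc t ^ (2 * n + 2) ≤ (1 / 2) ^ (2 * n + 2) := pow_le_pow_left₀ ht.1 ht.2 _
      _ = 1 / 4 / 4 ^ n := by
        rw [pow_add, pow_mul, one_div_pow, one_div_pow]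
        norm_num
        ring
  calc 1 / √(1 - t ^ 2) - invSqrtTaylor n t
      = (1 - invSqrtTaylor n t * √(1 - t ^ 2)) / √(1 - t ^ 2) := by
        field_simp
    _ ≤ (1 - invSqrtTaylor n t * √(1 - t ^ 2)) / (1 / 2) := by gcongr
    _ ≤ 2 * invSqrtCoeff n * (1 / 4 / 4 ^ n) / (1 / 2) := by
        gcongr
        exact hgap.trans (by have := invSqrtCoeff_pos n; gcongr)
    _ = invSqrtCoeff n / 4 ^ n := by ring

lemma arcsin_sub_arcsinTaylor_le (n : ℕ) {x : ℝ} (hx : x ∈ Icc (0 : ℝ) (1 / 2)) :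
    arcsin x - arcsinTaylor n x ≤ invSqrtCoeff n / 4 ^ n * x := by
  have hmono : MonotoneOn (fun s ↦ invSqrtCoeff n / 4 ^ n * s - (arcsin s - arcsinTaylor n s))
      (Icc 0 (1 / 2)) :=
    monotoneOn_of_hasDerivAt_nonneg (convex_Icc 0 (1 / 2))
      (fun s hs ↦ ((hasDerivAt_id s).const_mul _).sub ((hasDerivAt_arcsin
        (by linarith [hs.1]) (by linarith [hs.2])).sub (hasDerivAt_arcsinTaylor n s)))
      (fun s hs ↦ by simpa using one_div_sqrt_sub_invSqrtTaylor_le n hs)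
  have := hmono ⟨le_rfl, by norm_num⟩ hx hx.1
  simp only [mul_zero, arcsin_zero, arcsinTaylor_apply_zero, sub_zero] at this
  linarith

lemma abs_arcsin_sub_arcsinTaylor_le (n : ℕ) {x : ℝ} (hx : |x| ≤ 1 / 2) :
    |arcsin x - arcsinTaylor n x| ≤ invSqrtCoeff n / 4 ^ n * |x| := by
  have key : ∀ y ∈ Icc (0 : ℝ) (1 / 2),
      |arcsin y - arcsinTaylor n y| ≤ invSqrtCoeff n / 4 ^ n * y := fun y hy ↦ by
    have hδ : 0 ≤ invSqrtCoeff n / 4 ^ n * y :=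
      mul_nonneg (div_nonneg (invSqrtCoeff_pos n).le (by positivity)) hy.1
    have hlow := arcsinTaylor_le_arcsin n hy.1 (by linarith [hy.2])
    exact abs_le.2 ⟨by linarith, arcsin_sub_arcsinTaylor_le n hy⟩
  rcases le_total 0 x with hx₀ | hx₀
  · rw [abs_of_nonneg hx₀] at hx ⊢
    exact key x ⟨hx₀, hx⟩
  · rw [abs_of_nonpos hx₀] at hx ⊢
    have := key (-x) ⟨neg_nonneg.2 hx₀, hx⟩
    rwa [arcsin_neg, arcsinTaylor_neg, neg_sub_neg, abs_sub_comm] at this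

/-- There is an absolute constant `K > 0` such that for every integer `τ ≥ 1` and every
real `x` with `|x| ≤ 1/2`,
`arcsin x ≥ Σ_{k=0}^{τ} c_k x^(2k+1) − K · τ^{-1/2} · 4^{-τ}`. -/
theorem arcsin_ge_taylor_partial_sum_of_abs_le_half :
    ∃ K : ℝ, K > 0 ∧ ∀ τ : ℕ, 1 ≤ τ → ∀ x : ℝ, |x| ≤ 1 / 2 →
      Real.arcsin x ≥
        (∑ k ∈ Finset.range (τ + 1), arcsinCoeff k * x ^ (2 * k + 1)) -
          K * (Real.sqrt τ)⁻¹ * ((4 : ℝ) ^ τ)⁻¹ := by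
  refine ⟨1, one_pos, fun τ hτ x hx ↦ ?_⟩
  have hrem := abs_arcsin_sub_arcsinTaylor_le τ hx
  have hcoeff := invSqrtCoeff_le_inv_sqrt hτ
  have hbound : invSqrtCoeff τ / 4 ^ τ * |x| ≤ 1 * (√τ)⁻¹ * ((4 : ℝ) ^ τ)⁻¹ := by
    calc invSqrtCoeff τ / 4 ^ τ * |x| ≤ (√τ)⁻¹ / 4 ^ τ * 1 := by
          gcongr
          linarith
      _ = 1 * (√τ)⁻¹ * ((4 : ℝ) ^ τ)⁻¹ := by ring
  change arcsin x ≥ arcsinTaylor τ x - _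
  linarith [neg_abs_le (arcsin x - arcsinTaylor τ x)]
end

section
/- There is an absolute constant K > 0 such that for every integer k ≥ 1, |2√π · k^{3/2} · c_k − 1| ≤ K/k; in other words, c_k = (1/(2√π)) · k^{−3/2} · (1 + O(1/k)). -/
open Real Real.Wallis

theorem arcsinCoeff_sq_mul_W (k : ℕ) : arcsinCoeff k ^ 2 * (2 * k + 1) ^ 3 * W k = 1 := by
  have h16 : (2 : ℝ) ^ (4 * k) = ((4 : ℝ) ^ k) ^ 2 := by
    rw [show (4 : ℝ) = 2 ^ 2 by norm_num, ← pow_mul, ← pow_mul]; ring_nf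
  rw [W_eq_factorial_ratio, arcsinCoeff, h16]
  field_simp

theorem abs_sub_one_le_one_sub_sq {x : ℝ} (hx : 0 ≤ x) (hx1 : x ^ 2 ≤ 1) :
    |x - 1| ≤ 1 - x ^ 2 := by
  rw [abs_sub_comm, abs_of_nonneg (by nlinarith)]
  nlinarith

noncomputable def normalizedArcsinCoeff (k : ℕ) : ℝ :=
  2 * √π * (k : ℝ) ^ ((3 : ℝ) / 2) * arcsinCoeff k

theorem normalizedArcsinCoeff_nonneg (k : ℕ) : 0 ≤ normalizedArcsinCoeff k := by
  unfold normalizedArcsinCoeff arcsinCoeff; positivity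

theorem sq_normalizedArcsinCoeff (k : ℕ) :
    normalizedArcsinCoeff k ^ 2 = 4 * k ^ 3 * π / ((2 * k + 1) ^ 3 * W k) := by
  have hW := arcsinCoeff_sq_mul_W k
  have hk : ((k : ℝ) ^ ((3 : ℝ) / 2)) ^ 2 = k ^ 3 := by
    rw [← rpow_natCast, ← rpow_mul k.cast_nonneg]; norm_num
  rw [normalizedArcsinCoeff, eq_div_iff (by positivity [W_pos k]), mul_pow, mul_pow, mul_pow, hk,
    sq_sqrt pi_pos.le]
  linear_combination 4 * k ^ 3 * π * hW

theorem sq_normalizedArcsinCoeff_le_one (k : ℕ) : normalizedArcsinCoeff k ^ 2 ≤ 1 := by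
  have hW := le_W k
  rw [sq_normalizedArcsinCoeff, div_le_one (by positivity [W_pos k])]
  have hpoly : 8 * (k : ℝ) ^ 3 * (2 * k + 2) ≤ (2 * k + 1) ^ 4 := by
    have hk0 : (0 : ℝ) ≤ k := k.cast_nonneg
    nlinarith [pow_nonneg hk0 2, pow_nonneg hk0 3]
  calc 4 * (k : ℝ) ^ 3 * π = 8 * k ^ 3 * (2 * k + 2) * (π / 2) / (2 * k + 2) := by
        field_simp; ring
    _ ≤ (2 * k + 1) ^ 4 * (π / 2) / (2 * k + 2) := by gcongr
    _ = (2 * k + 1) ^ 3 * ((2 * k + 1) / (2 * k + 2) * (π / 2)) := by ring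
    _ ≤ (2 * k + 1) ^ 3 * W k := by gcongr

theorem eight_mul_cube_div_le_sq_normalizedArcsinCoeff (k : ℕ) :
    8 * k ^ 3 / (2 * k + 1) ^ 3 ≤ normalizedArcsinCoeff k ^ 2 := by
  have hW := W_le k
  rw [sq_normalizedArcsinCoeff, div_le_div_iff₀ (by positivity) (by positivity [W_pos k])]
  calc 8 * (k : ℝ) ^ 3 * ((2 * k + 1) ^ 3 * W k) ≤ 8 * k ^ 3 * ((2 * k + 1) ^ 3 * (π / 2)) := by
        gcongr
    _ = 4 * k ^ 3 * π * (2 * k + 1) ^ 3 := by ring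

theorem one_sub_eight_mul_cube_div_le {n : ℝ} (hn : 0 < n) :
    1 - 8 * n ^ 3 / (2 * n + 1) ^ 3 ≤ 3 / n := by
  rw [one_sub_div (by positivity), div_le_div_iff₀ (by positivity) hn]
  nlinarith [pow_pos hn 2, pow_pos hn 3]

/-- There is an absolute constant `K > 0` such that for every integer `k ≥ 1`,
`|2√π · k^{3/2} · c_k − 1| ≤ K/k`, i.e. `c_k = (1/(2√π)) · k^{-3/2} · (1 + O(1/k))`. -/
theorem arcsinCoeff_asymptotics :
    ∃ K : ℝ, K > 0 ∧ ∀ k : ℕ, 1 ≤ k →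
      |2 * Real.sqrt Real.pi * (k : ℝ) ^ ((3 : ℝ) / 2) * arcsinCoeff k - 1| ≤ K / k := by
  refine ⟨3, by norm_num, fun k hk => ?_⟩
  change |normalizedArcsinCoeff k - 1| ≤ 3 / k
  calc |normalizedArcsinCoeff k - 1| ≤ 1 - normalizedArcsinCoeff k ^ 2 :=
        abs_sub_one_le_one_sub_sq (normalizedArcsinCoeff_nonneg k)
          (sq_normalizedArcsinCoeff_le_one k)
    _ ≤ 1 - 8 * k ^ 3 / (2 * k + 1) ^ 3 := by
        linarith [eight_mul_cube_div_le_sq_normalizedArcsinCoeff k]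
    _ ≤ 3 / k := one_sub_eight_mul_cube_div_le (by exact_mod_cast hk)
end

section
/- There exist absolute constants c₁, c₂ > 0 such that for every integer τ ≥ 1, c₁ · τ^{−1/2} ≤ Σ_{k=τ}^{∞} c_k ≤ c₂ · τ^{−1/2}. -/
/-!
Write `c_k = q_k / (2k + 1)` with the Wallis ratio `q_k = binom(2k, k) / 4 ^ k`. The recursion
`q_{k+1} = q_k (2k + 1) / (2k + 2)` together with `(2k + 1)(2k + 3) ≤ (2k + 2)²` and
`4k(k + 1) ≤ (2k + 1)²` shows by induction that `1 / (4k) ≤ q_k² ≤ 1 / (2k + 1)`. Hence `c_k`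
is comparable, up to the factors `1/3` and `2`, with the telescoping difference
`k^{-1/2} - (k + 1)^{-1/2}`, whose sum over `k ≥ τ` is exactly `τ^{-1/2}`.
-/

open Filter Topology

section Telescoping

variable {a f : ℕ → ℝ}

theorem hasSum_sub_succ_of_antitone {l : ℝ} (hf : Antitone f) (hl : Tendsto f atTop (𝓝 l)) :
    HasSum (fun n ↦ f n - f (n + 1)) (f 0 - l) := by
  rw [hasSum_iff_tendsto_nat_of_nonneg fun n ↦ sub_nonneg.2 (hf n.le_succ)]
  simpa only [Finset.sum_range_sub'] using hl.const_sub (f 0)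

theorem tsum_bounds_of_sub_succ_bounds {c C : ℝ} (hf : Antitone f)
    (hl : Tendsto f atTop (𝓝 0)) (hc : 0 ≤ c)
    (hlow : ∀ n, c * (f n - f (n + 1)) ≤ a n) (hup : ∀ n, a n ≤ C * (f n - f (n + 1))) :
    c * f 0 ≤ ∑' n, a n ∧ ∑' n, a n ≤ C * f 0 := by
  have hΔ : HasSum (fun n ↦ f n - f (n + 1)) (f 0) := by
    simpa only [sub_zero] using hasSum_sub_succ_of_antitone hf hl
  have ha (n : ℕ) : 0 ≤ a n := (mul_nonneg hc (sub_nonneg.2 (hf n.le_succ))).trans (hlow n)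
  have ha_sum : Summable a := (hΔ.mul_left C).summable.of_nonneg_of_le ha hup
  exact ⟨hasSum_le hlow (hΔ.mul_left c) ha_sum.hasSum,
    hasSum_le hup ha_sum.hasSum (hΔ.mul_left C)⟩

end Telescoping

/-- The Wallis ratio `(2k-1)!! / (2k)!!`. -/
noncomputable def centralBinomRatio (k : ℕ) : ℝ := k.centralBinom / 4 ^ k

theorem centralBinomRatio_pos (k : ℕ) : 0 < centralBinomRatio k :=
  div_pos (mod_cast k.centralBinom_pos) (by positivity)

theorem centralBinomRatio_zero : centralBinomRatio 0 = 1 := by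
  simp [centralBinomRatio]

theorem centralBinomRatio_succ (k : ℕ) :
    centralBinomRatio (k + 1) = centralBinomRatio k * (2 * k + 1) / (2 * k + 2) := by
  have h : ((k : ℝ) + 1) * (k + 1).centralBinom = 2 * (2 * k + 1) * k.centralBinom := by
    exact_mod_cast k.succ_mul_centralBinom_succ
  unfold centralBinomRatio
  rw [eq_div_iff (by positivity), pow_succ]
  field_simp
  linear_combination 2 * h

theorem arcsinCoeff_eq_centralBinomRatio_div (k : ℕ) :
    arcsinCoeff k = centralBinomRatio k / (2 * k + 1) := by
  have h : ((2 * k).factorial : ℝ) = k.centralBinom * k.factorial ^ 2 := by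
    have := Nat.choose_mul_factorial_mul_factorial (Nat.le_mul_of_pos_left k two_pos)
    rw [show 2 * k - k = k by omega] at this
    rw [Nat.centralBinom_eq_two_mul_choose, ← this]
    push_cast
    ring
  unfold arcsinCoeff centralBinomRatio
  rw [h]
  field_simp

theorem centralBinomRatio_sq_mul_le_one (k : ℕ) :
    centralBinomRatio k ^ 2 * (2 * k + 1) ≤ 1 := by
  induction k with
  | zero => simp [centralBinomRatio_zero]
  | succ k ih =>
    rw [centralBinomRatio_succ, div_pow, mul_pow, div_mul_eq_mul_div, div_le_one (by positivity)]
    push_cast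
    nlinarith [sq_nonneg (centralBinomRatio k)]

theorem one_le_four_mul_mul_centralBinomRatio_sq {k : ℕ} (hk : 1 ≤ k) :
    1 ≤ 4 * k * centralBinomRatio k ^ 2 := by
  induction k, hk using Nat.le_induction with
  | base => norm_num [centralBinomRatio_succ, centralBinomRatio_zero]
  | succ k hk ih =>
    rw [centralBinomRatio_succ, div_pow, mul_pow, mul_div_assoc', le_div_iff₀ (by positivity)]
    push_cast
    nlinarith [sq_nonneg (centralBinomRatio k)]

theorem centralBinomRatio_mul_sqrt_le_one (k : ℕ) : centralBinomRatio k * √k ≤ 1 := by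
  rw [← Real.sqrt_sq (centralBinomRatio_pos k).le, ← Real.sqrt_mul (sq_nonneg _),
    Real.sqrt_le_one]
  nlinarith [centralBinomRatio_sq_mul_le_one k, sq_nonneg (centralBinomRatio k)]

theorem one_le_two_mul_centralBinomRatio_mul_sqrt {k : ℕ} (hk : 1 ≤ k) :
    1 ≤ 2 * centralBinomRatio k * √k := by
  rw [mul_assoc, ← Real.sqrt_sq (centralBinomRatio_pos k).le, ← Real.sqrt_mul (sq_nonneg _),
    show (2 : ℝ) = √4 by norm_num, ← Real.sqrt_mul (by norm_num), Real.one_le_sqrt]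
  linarith [one_le_four_mul_mul_centralBinomRatio_sq hk]

theorem inv_sqrt_sub_inv_sqrt_add_one {x : ℝ} (hx : 0 < x) :
    (√x)⁻¹ - (√(x + 1))⁻¹ = (√x * √(x + 1) * (√x + √(x + 1)))⁻¹ := by
  have hs : 0 < √x := Real.sqrt_pos.2 hx
  have ht : 0 < √(x + 1) := Real.sqrt_pos.2 (by linarith)
  have hdiff : (√(x + 1) - √x) * (√(x + 1) + √x) = 1 := by
    nlinarith [Real.sq_sqrt hx.le, Real.sq_sqrt (by linarith : 0 ≤ x + 1)]
  field_simp
  linear_combination hdiff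

theorem arcsinCoeff_le_two_mul_inv_sqrt_sub {n : ℕ} (hn : 1 ≤ n) :
    arcsinCoeff n ≤ 2 * ((√n)⁻¹ - (√(n + 1 : ℝ))⁻¹) := by
  have hn' : (1 : ℝ) ≤ n := by exact_mod_cast hn
  have hq := centralBinomRatio_mul_sqrt_le_one n
  rw [arcsinCoeff_eq_centralBinomRatio_div, inv_sqrt_sub_inv_sqrt_add_one (by positivity),
    ← div_eq_mul_inv, div_le_div_iff₀ (by positivity) (by positivity)]
  have hs := Real.sq_sqrt (by positivity : (0 : ℝ) ≤ n)
  have ht := Real.sq_sqrt (by positivity : (0 : ℝ) ≤ n + 1)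
  have hst : √n ≤ √(n + 1 : ℝ) := Real.sqrt_le_sqrt (by linarith)
  nlinarith [mul_le_mul_of_nonneg_right hq
      (by positivity : 0 ≤ √(n + 1 : ℝ) * (√n + √(n + 1 : ℝ))),
    mul_le_mul_of_nonneg_left hst (Real.sqrt_nonneg (n + 1 : ℝ))]

theorem inv_sqrt_sub_le_three_mul_arcsinCoeff {n : ℕ} (hn : 1 ≤ n) :
    (√n)⁻¹ - (√(n + 1 : ℝ))⁻¹ ≤ 3 * arcsinCoeff n := by
  have hn' : (1 : ℝ) ≤ n := by exact_mod_cast hn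
  have hq := one_le_two_mul_centralBinomRatio_mul_sqrt hn
  rw [arcsinCoeff_eq_centralBinomRatio_div, inv_sqrt_sub_inv_sqrt_add_one (by positivity),
    ← mul_div_assoc, inv_eq_one_div, div_le_div_iff₀ (by positivity) (by positivity)]
  have hs := Real.sq_sqrt (by positivity : (0 : ℝ) ≤ n)
  have hst : √n ≤ √(n + 1 : ℝ) := Real.sqrt_le_sqrt (by linarith)
  nlinarith [mul_le_mul_of_nonneg_right hq
      (by positivity : 0 ≤ √(n + 1 : ℝ) * (√n + √(n + 1 : ℝ))),
    mul_le_mul_of_nonneg_left hst (Real.sqrt_nonneg (n : ℝ))]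

theorem antitone_inv_sqrt_add_natCast {x : ℝ} (hx : 0 < x) :
    Antitone fun k : ℕ ↦ (√(x + k))⁻¹ :=
  antitone_nat_of_succ_le fun k ↦ inv_anti₀ (Real.sqrt_pos.2 (by positivity))
    (Real.sqrt_le_sqrt (by push_cast; linarith))

theorem tendsto_inv_sqrt_add_natCast (x : ℝ) :
    Tendsto (fun k : ℕ ↦ (√(x + k))⁻¹) atTop (𝓝 0) :=
  tendsto_inv_atTop_zero.comp <| Real.tendsto_sqrt_atTop.comp <|
    tendsto_atTop_add_const_left _ _ tendsto_natCast_atTop_atTop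

/-- There are absolute constants `c₁, c₂ > 0` such that for every integer `τ ≥ 1`,
`c₁ · τ^{-1/2} ≤ Σ_{k=τ}^{∞} c_k ≤ c₂ · τ^{-1/2}`. -/
theorem arcsinCoeff_tail_sum_bounds :
    ∃ c₁ c₂ : ℝ, c₁ > 0 ∧ c₂ > 0 ∧ ∀ τ : ℕ, 1 ≤ τ →
      c₁ * (Real.sqrt τ)⁻¹ ≤ ∑' k : ℕ, arcsinCoeff (τ + k) ∧
      (∑' k : ℕ, arcsinCoeff (τ + k)) ≤ c₂ * (Real.sqrt τ)⁻¹ := by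
  refine ⟨3⁻¹, 2, by norm_num, by norm_num, fun τ hτ ↦ ?_⟩
  have hτ' : (0 : ℝ) < τ := by exact_mod_cast hτ
  have hΔ (k : ℕ) : (√(τ + k : ℝ))⁻¹ - (√(τ + ↑(k + 1) : ℝ))⁻¹
      = (√↑(τ + k))⁻¹ - (√(↑(τ + k) + 1 : ℝ))⁻¹ := by
    push_cast
    ring_nf
  simpa using tsum_bounds_of_sub_succ_bounds (a := fun k ↦ arcsinCoeff (τ + k))
    (antitone_inv_sqrt_add_natCast hτ') (tendsto_inv_sqrt_add_natCast τ) (by norm_num)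
    (fun k ↦ by
      rw [hΔ, inv_mul_le_iff₀ three_pos]
      exact inv_sqrt_sub_le_three_mul_arcsinCoeff (by omega))
    (fun k ↦ hΔ k ▸ arcsinCoeff_le_two_mul_inv_sqrt_sub (by omega))
end

section
/- For every real x with |x| ≤ 1, the series Σ_{k=0}^{∞} c_k x^{2k+1} converges and its sum equals arcsin(x). -/
open Real Filter Topology Set

lemma ascPochhammer_eval_one_half (n : ℕ) :
    (ascPochhammer ℝ n).eval (1 / 2) = (2 * n).factorial / (4 ^ n * n.factorial) := by
  induction n with
  | zero => simp
  | succ n ih =>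
    rw [ascPochhammer_succ_eval, ih, show 2 * (n + 1) = 2 * n + 1 + 1 by ring,
      Nat.factorial_succ, Nat.factorial_succ, Nat.factorial_succ]
    push_cast
    field_simp
    ring

lemma multichoose_one_half (n : ℕ) :
    Ring.multichoose (1 / 2 : ℝ) n = (2 * n).factorial / (4 ^ n * n.factorial ^ 2) := by
  have h := Ring.factorial_nsmul_multichoose_eq_ascPochhammer (1 / 2 : ℝ) n
  rw [Polynomial.ascPochhammer_smeval_eq_eval, ascPochhammer_eval_one_half, nsmul_eq_mul] at h
  have : (n.factorial : ℝ) ≠ 0 := by positivity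
  field_simp at h ⊢
  linear_combination h

lemma hasSum_multichoose_one_half_mul_pow {t : ℝ} (ht : |t| < 1) :
    HasSum (fun n ↦ Ring.multichoose (1 / 2 : ℝ) n * t ^ n) (1 / √(1 - t)) := by
  have h := (one_div_one_sub_rpow_hasFPowerSeriesOnBall_zero (1 / 2)).hasSum
    (y := t) (by simpa [enorm_eq_nnnorm, ← NNReal.coe_lt_one] using ht)
  simp only [FormalMultilinearSeries.ofScalars_apply_eq, smul_eq_mul, zero_add] at h
  simpa [Ring.multichoose_eq, sqrt_eq_rpow] using h

lemma arcsinCoeff_eq_multichoose_div (k : ℕ) :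
    arcsinCoeff k = Ring.multichoose (1 / 2 : ℝ) k / (2 * k + 1) := by
  rw [arcsinCoeff, multichoose_one_half, div_div]

lemma arcsinCoeff_nonneg (k : ℕ) : 0 ≤ arcsinCoeff k := by
  unfold arcsinCoeff
  positivity

lemma hasDerivAt_arcsinCoeff_mul_pow (k : ℕ) (y : ℝ) :
    HasDerivAt (fun y ↦ arcsinCoeff k * y ^ (2 * k + 1))
      (Ring.multichoose (1 / 2 : ℝ) k * (y ^ 2) ^ k) y := by
  refine ((hasDerivAt_pow (2 * k + 1) y).const_mul (arcsinCoeff k)).congr_deriv ?_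
  rw [arcsinCoeff_eq_multichoose_div, Nat.add_sub_cancel, pow_mul]
  field_simp
  push_cast
  ring

lemma norm_multichoose_one_half_mul_sq_pow_le {y r : ℝ} (hy : |y| ≤ r) (k : ℕ) :
    ‖Ring.multichoose (1 / 2 : ℝ) k * (y ^ 2) ^ k‖ ≤
      Ring.multichoose (1 / 2 : ℝ) k * (r ^ 2) ^ k := by
  have hc : 0 ≤ Ring.multichoose (1 / 2 : ℝ) k := by rw [multichoose_one_half]; positivity
  rw [norm_mul, norm_pow, Real.norm_of_nonneg hc, norm_pow, Real.norm_eq_abs]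
  gcongr

lemma hasSum_arcsin_of_abs_lt {x : ℝ} (hx : |x| < 1) :
    HasSum (fun k ↦ arcsinCoeff k * x ^ (2 * k + 1)) (arcsin x) := by
  obtain ⟨r, hxr, hr⟩ := exists_between hx
  have hr₀ : 0 < r := (abs_nonneg x).trans_lt hxr
  have hsq_lt {y : ℝ} (hy : |y| ≤ r) : |y ^ 2| < 1 := by
    rw [abs_pow]
    exact pow_lt_one₀ (abs_nonneg y) (hy.trans_lt hr) two_ne_zero
  have hu : Summable fun k ↦ Ring.multichoose (1 / 2 : ℝ) k * (r ^ 2) ^ k :=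
    (hasSum_multichoose_one_half_mul_pow (hsq_lt (abs_of_pos hr₀).le)).summable
  have hbound (k : ℕ) (y : ℝ) (hy : y ∈ Ioo (-r) r) :=
    norm_multichoose_one_half_mul_sq_pow_le (abs_lt.2 hy).le k
  have h₀ : (0 : ℝ) ∈ Ioo (-r) r := abs_lt.1 (by simpa using hr₀)
  have hg₀ : Summable fun k ↦ arcsinCoeff k * (0 : ℝ) ^ (2 * k + 1) := by simp
  have hderiv (y : ℝ) (hy : y ∈ Ioo (-r) r) :
      HasDerivAt (fun y ↦ ∑' k, arcsinCoeff k * y ^ (2 * k + 1)) (1 / √(1 - y ^ 2)) y := by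
    have h := hasDerivAt_tsum_of_isPreconnected hu isOpen_Ioo isPreconnected_Ioo
      (fun k y _ ↦ hasDerivAt_arcsinCoeff_mul_pow k y) hbound h₀ hg₀ hy
    rwa [(hasSum_multichoose_one_half_mul_pow (hsq_lt (abs_lt.2 hy).le)).tsum_eq] at h
  have heq : EqOn (fun y ↦ ∑' k, arcsinCoeff k * y ^ (2 * k + 1)) arcsin (Ioo (-r) r) :=
    isOpen_Ioo.eqOn_of_deriv_eq isPreconnected_Ioo
      (fun y hy ↦ (hderiv y hy).differentiableAt.differentiableWithinAt)
      (fun y hy ↦ (hasDerivAt_arcsin (by linarith [hy.1]) (by linarith [hy.2])).differentiableAt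
        |>.differentiableWithinAt)
      (fun y hy ↦ by rw [(hderiv y hy).deriv, deriv_arcsin]) h₀ (by simp)
  rw [← heq (abs_lt.1 hxr)]
  exact (summable_of_summable_hasDerivAt_of_isPreconnected hu isOpen_Ioo isPreconnected_Ioo
    (fun k y _ ↦ hasDerivAt_arcsinCoeff_mul_pow k y) hbound h₀ hg₀ (abs_lt.1 hxr)).hasSum

lemma summable_arcsinCoeff : Summable arcsinCoeff := by
  refine summable_of_sum_range_le arcsinCoeff_nonneg (c := π / 2) fun N ↦ ?_
  have hlim : Tendsto (fun x ↦ ∑ k ∈ Finset.range N, arcsinCoeff k * x ^ (2 * k + 1))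
      (𝓝[<] 1) (𝓝 (∑ k ∈ Finset.range N, arcsinCoeff k)) := by
    have hc : Continuous fun x : ℝ ↦ ∑ k ∈ Finset.range N, arcsinCoeff k * x ^ (2 * k + 1) := by
      fun_prop
    simpa using (hc.tendsto 1).mono_left nhdsWithin_le_nhds
  refine le_of_tendsto hlim ?_
  filter_upwards [Ioo_mem_nhdsLT zero_lt_one] with x hx
  have hx' : |x| < 1 := by rw [abs_of_pos hx.1]; exact hx.2
  calc ∑ k ∈ Finset.range N, arcsinCoeff k * x ^ (2 * k + 1)
      ≤ arcsin x := sum_le_hasSum _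
        (fun k _ ↦ mul_nonneg (arcsinCoeff_nonneg k) (pow_nonneg hx.1.le _))
        (hasSum_arcsin_of_abs_lt hx')
    _ ≤ π / 2 := arcsin_le_pi_div_two x

lemma norm_arcsinCoeff_mul_pow_le {x : ℝ} (hx : |x| ≤ 1) (k : ℕ) :
    ‖arcsinCoeff k * x ^ (2 * k + 1)‖ ≤ arcsinCoeff k := by
  rw [norm_mul, norm_pow, Real.norm_of_nonneg (arcsinCoeff_nonneg k)]
  exact mul_le_of_le_one_right (arcsinCoeff_nonneg k) (pow_le_one₀ (norm_nonneg x) hx)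

/-- For every real `x` with `|x| ≤ 1`, the series `Σ_{k=0}^∞ c_k x^(2k+1)` converges and
its sum equals `arcsin x`. -/
theorem hasSum_arcsin_taylor_series (x : ℝ) (hx : |x| ≤ 1) :
    HasSum (fun k : ℕ => arcsinCoeff k * x ^ (2 * k + 1)) (Real.arcsin x) := by
  have hcont : ContinuousOn (fun y ↦ ∑' k, arcsinCoeff k * y ^ (2 * k + 1)) (Icc (-1) 1) :=
    continuousOn_tsum (fun k ↦ by fun_prop) summable_arcsinCoeff
      fun k y hy ↦ norm_arcsinCoeff_mul_pow_le (abs_le.2 hy) k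
  have heq : EqOn (fun y ↦ ∑' k, arcsinCoeff k * y ^ (2 * k + 1)) arcsin (Icc (-1) 1) :=
    EqOn.of_subset_closure (s := Ioo (-1) 1)
      (fun y hy ↦ (hasSum_arcsin_of_abs_lt (abs_lt.2 hy)).tsum_eq) hcont
      continuous_arcsin.continuousOn Ioo_subset_Icc_self (closure_Ioo (by norm_num)).superset
  rw [← heq (abs_le.1 hx)]
  exact (summable_arcsinCoeff.of_norm_bounded (norm_arcsinCoeff_mul_pow_le hx)).hasSum
end

section
/- Let A ∈ ℝ^{d×d} be positive semidefinite. Then for every natural number k and every vector w ∈ ℝ^d, Σ_{i,j=1}^{d} w_i w_j · (A_{ij})^{2k+1} ≥ 0. -/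
/-!
By the Schur product theorem every Hadamard power `A ⊙ ⋯ ⊙ A` of a positive semidefinite
matrix is again positive semidefinite, and the double sum is the quadratic form of the
`(2k+1)`-st entrywise power at `w`.
-/

namespace Matrix

open scoped ComplexOrder

variable {ι 𝕜 : Type*} [Fintype ι] [RCLike 𝕜]

theorem PosSemidef.map_pow {A : Matrix ι ι 𝕜} (hA : A.PosSemidef) (n : ℕ) :
    (A.map (· ^ n)).PosSemidef := by
  induction n with
  | zero =>
    have hones : A.map (· ^ 0) = vecMulVec (fun _ ↦ 1) (star fun _ ↦ 1) := by
      ext i j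
      simp [vecMulVec_apply]
    rw [hones]
    exact posSemidef_vecMulVec_self_star _
  | succ n ih =>
    have hsucc : A.map (· ^ (n + 1)) = A.map (· ^ n) ⊙ A := by
      ext i j
      simp [pow_succ]
    rw [hsucc]
    exact ih.hadamard hA

theorem dotProduct_mulVec_eq_sum_sum {R : Type*} [CommSemiring R] (B : Matrix ι ι R)
    (w : ι → R) : w ⬝ᵥ B *ᵥ w = ∑ i, ∑ j, w i * w j * B i j := by
  simp only [dotProduct, mulVec, Finset.mul_sum]
  exact Finset.sum_congr rfl fun i _ ↦ Finset.sum_congr rfl fun j _ ↦ by ring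

end Matrix

/-- If `A ∈ ℝ^{d×d}` is positive semidefinite, then for every natural number `k` and
every `w ∈ ℝ^d`, `Σ_{i,j} w_i w_j (A_{ij})^(2k+1) ≥ 0`. -/
theorem odd_entrywise_power_psd_quadratic_form_nonneg (d : ℕ)
    (A : Matrix (Fin d) (Fin d) ℝ) (hA : A.PosSemidef) (k : ℕ) (w : Fin d → ℝ) :
    0 ≤ ∑ i, ∑ j, w i * w j * (A i j) ^ (2 * k + 1) := by
  simpa [Matrix.dotProduct_mulVec_eq_sum_sum] using
    (hA.map_pow (2 * k + 1)).dotProduct_mulVec_nonneg w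
end

section
/- Let v_i, v_j, v_k be unit vectors in ℝⁿ and b_j, b_k ∈ {−1,+1}. Set ρ_j = ⟨v_i, v_j⟩ and ρ_k = ⟨v_i, v_k⟩, and suppose b_j ρ_j ∈ [0.679, 0.699] and b_k ρ_k ∈ [0.679, 0.699]. Suppose also the ℓ₂² triangle inequality ‖v_i − b_j v_j‖² + ‖v_i − b_k v_k‖² ≥ ‖b_j v_j − b_k v_k‖² holds. Let v̂_j = (v_j − ρ_j v_i)/‖v_j − ρ_j v_i‖ and v̂_k = (v_k − ρ_k v_i)/‖v_k − ρ_k v_i‖ be the normalized components of v_j and v_k orthogonal to v_i. Then b_j b_k ⟨v̂_j, v̂_k⟩ ≥ −0.2. -/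
open RealInnerProductSpace

set_option maxHeartbeats 2000000 in
/-- Triangle-inequality consequence: if `v_i, v_j, v_k` are unit vectors with
`b_j⟨v_i,v_j⟩, b_k⟨v_i,v_k⟩ ∈ [0.679, 0.699]` satisfying the ℓ₂² triangle inequality,
then the normalized components of `v_j, v_k` orthogonal to `v_i` satisfy
`b_j b_k ⟨v̂_j, v̂_k⟩ ≥ -0.2`. -/
theorem normalized_orthogonal_components_inner_ge (n : ℕ)
    (vi vj vk : EuclideanSpace ℝ (Fin n))
    (hvi : ‖vi‖ = 1) (hvj : ‖vj‖ = 1) (hvk : ‖vk‖ = 1)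
    (bj bk : ℝ) (hbj : bj = 1 ∨ bj = -1) (hbk : bk = 1 ∨ bk = -1)
    (hρj : bj * ⟪vi, vj⟫ ∈ Set.Icc (0.679 : ℝ) 0.699)
    (hρk : bk * ⟪vi, vk⟫ ∈ Set.Icc (0.679 : ℝ) 0.699)
    (htri : ‖vi - bj • vj‖ ^ 2 + ‖vi - bk • vk‖ ^ 2 ≥ ‖bj • vj - bk • vk‖ ^ 2) :
    bj * bk *
        ⟪(‖vj - ⟪vi, vj⟫ • vi‖)⁻¹ • (vj - ⟪vi, vj⟫ • vi),
          (‖vk - ⟪vi, vk⟫ • vi‖)⁻¹ • (vk - ⟪vi, vk⟫ • vi)⟫ ≥ -0.2 := by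
  have hbj2 : bj ^ 2 = 1 := by rcases hbj with h | h <;> simp [h]
  have hbk2 : bk ^ 2 = 1 := by rcases hbk with h | h <;> simp [h]
  set ρj : ℝ := ⟪vi, vj⟫ with hρjdef
  set ρk : ℝ := ⟪vi, vk⟫ with hρkdef
  set t : ℝ := ⟪vj, vk⟫ with htdef
  obtain ⟨haj1, haj2⟩ := hρj
  obtain ⟨hak1, hak2⟩ := hρk
  -- squared norms of the orthogonal components
  have hnj2 : ‖vj - ρj • vi‖ ^ 2 = 1 - ρj ^ 2 := by
    rw [@norm_sub_sq_real, real_inner_smul_right, norm_smul, real_inner_comm]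
    simp [hvi, hvj, ← hρjdef]
    ring_nf
  have hnk2 : ‖vk - ρk • vi‖ ^ 2 = 1 - ρk ^ 2 := by
    rw [@norm_sub_sq_real, real_inner_smul_right, norm_smul, real_inner_comm]
    simp [hvi, hvk, ← hρkdef]
    ring_nf
  -- the triangle inequality in inner-product form
  have htri' : bj * bk * t ≥ bj * ρj + bk * ρk - 1 := by
    have e1 : ‖vi - bj • vj‖ ^ 2 = 2 - 2 * (bj * ρj) := by
      rw [@norm_sub_sq_real, real_inner_smul_right, norm_smul]
      simp [hvi, hvj, ← hρjdef]
      ring_nf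
      linarith [hbj2]
    have e2 : ‖vi - bk • vk‖ ^ 2 = 2 - 2 * (bk * ρk) := by
      rw [@norm_sub_sq_real, real_inner_smul_right, norm_smul]
      simp [hvi, hvk, ← hρkdef]
      ring_nf
      linarith [hbk2]
    have e3 : ‖bj • vj - bk • vk‖ ^ 2 = 2 - 2 * (bj * bk * t) := by
      rw [@norm_sub_sq_real, real_inner_smul_right, real_inner_smul_left, norm_smul, norm_smul]
      simp [hvj, hvk, ← htdef]
      ring_nf
      nlinarith [hbj2, hbk2]
    rw [e1, e2, e3] at htri
    linarith
  -- positivity of the norms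
  have hρj2 : ρj ^ 2 = (bj * ρj) ^ 2 := by rw [mul_pow, hbj2, one_mul]
  have hρk2 : ρk ^ 2 = (bk * ρk) ^ 2 := by rw [mul_pow, hbk2, one_mul]
  have hnjsq : 0 < ‖vj - ρj • vi‖ ^ 2 := by rw [hnj2, hρj2]; nlinarith
  have hnksq : 0 < ‖vk - ρk • vi‖ ^ 2 := by rw [hnk2, hρk2]; nlinarith
  have hnjpos : 0 < ‖vj - ρj • vi‖ :=
    lt_of_pow_lt_pow_left₀ 2 (norm_nonneg _) (by simpa using hnjsq)
  have hnkpos : 0 < ‖vk - ρk • vi‖ :=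
    lt_of_pow_lt_pow_left₀ 2 (norm_nonneg _) (by simpa using hnksq)
  set nj : ℝ := ‖vj - ρj • vi‖
  set nk : ℝ := ‖vk - ρk • vi‖
  -- inner product of the orthogonal components
  have hvii : ⟪vi, vi⟫ = 1 := by
    rw [real_inner_self_eq_norm_sq, hvi]; norm_num
  have hwjk : ⟪vj - ρj • vi, vk - ρk • vi⟫ = t - ρj * ρk := by
    simp only [inner_sub_left, inner_sub_right, real_inner_smul_left, real_inner_smul_right]
    simp only [real_inner_comm vj vi, hvii, ← hρjdef, ← hρkdef, ← htdef]
    rw [real_inner_comm vi vj, ← hρjdef]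
    ring
  rw [real_inner_smul_left, real_inner_smul_right, hwjk]
  clear_value nj nk ρj ρk t
  clear hwjk hvii htri hvi hvj hvk hbj hbk hnjsq hnksq
  clear hρjdef hρkdef htdef
  clear vi vj vk
  -- key scalar inequality
  have hkey : bj * bk * (t - ρj * ρk) ≥ -0.2 * (nj * nk) := by
    have hac : bj * bk * (ρj * ρk) = (bj * ρj) * (bk * ρk) := by ring
    have h1 : bj * bk * (t - ρj * ρk) ≥ -(1 - bj * ρj) * (1 - bk * ρk) := by
      nlinarith [htri']
    have h2 : (0.2 : ℝ) * (nj * nk) ≥ (1 - bj * ρj) * (1 - bk * ρk) := by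
      have hP : 0 < nj * nk := mul_pos hnjpos hnkpos
      have hA : (0:ℝ) ≤ 1 - bj * ρj := by linarith
      have hC : (0:ℝ) ≤ 1 - bk * ρk := by linarith
      have hD : (0:ℝ) ≤ 0.04 * ((1 + bj * ρj) * (1 + bk * ρk)) - (1 - bj * ρj) * (1 - bk * ρk) := by
        nlinarith [mul_nonneg (by linarith : (0:ℝ) ≤ bj * ρj - 0.679) (by linarith : (0:ℝ) ≤ bk * ρk - 0.679)]
      have hprod : (nj * nk) ^ 2 = (1 - (bj * ρj) ^ 2) * (1 - (bk * ρk) ^ 2) := by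
        rw [mul_pow, hnj2, hnk2, hρj2, hρk2]
      have hsq : (0.2 * (nj * nk)) ^ 2 - ((1 - bj * ρj) * (1 - bk * ρk)) ^ 2 ≥ 0 := by
        rw [mul_pow, hprod]
        nlinarith [mul_nonneg (mul_nonneg hA hC) hD]
      nlinarith [hsq, hP, mul_nonneg hA hC]
    linarith
  -- finish
  rw [ge_iff_le,
    show bj * bk * (nj⁻¹ * (nk⁻¹ * (t - ρj * ρk))) = (bj * bk * (t - ρj * ρk)) / (nj * nk) by
      field_simp,
    le_div_iff₀ (mul_pos hnjpos hnkpos)]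
  linarith [hkey]
end
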